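/- Let p1,…,p5 ∈ ℝ⁴ be affinely independent and a > 0. Then the quality heuristic η⁽²⁾ := trace(A(R,T)) / (2·√(trace(A(R,T)·A(R,T)ᵀ))) — which equals the ratio of the arithmetic mean to the root-mean-square of the four eigenvalues of A(R,T) — satisfies η⁽²⁾ = 6 · (Σ_{1 ≤ i < j ≤ 5} d_{ij}) / √Θ, where Θ is the explicit polynomial in the squared edge lengths given in the context; in particular η⁽²⁾ does not depend on a. -/

import Mathlib

open Real Matrix

/-- The edge-vector matrix of the regular pentatope with edge length `a`. -/
noncomputable def regularPentatopeMatrix (a : ℝ) : Matrix (Fin 4) (Fin 4) ℝ :=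
  !![a * Real.sqrt 3 / 2, a * Real.sqrt 3 / 2, a * Real.sqrt 3 / 3, a * Real.sqrt 3 / 3;
     -a / 2,              a / 2,               0,                   0;
     0,                   0,                   a * Real.sqrt 6 / 3, a * Real.sqrt 6 / 12;
     0,                   0,                   0,                   a * Real.sqrt 10 / 4]

/-- The edge-vector matrix of the pentatope with vertices `p 0, …, p 4`. -/
noncomputable def edgeMatrix (p : Fin 5 → EuclideanSpace ℝ (Fin 4)) :
    Matrix (Fin 4) (Fin 4) ℝ :=
  Matrix.of fun (k : Fin 4) (i : Fin 4) => (p i.succ - p 0) k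

/-- `A(R,T) = (R⁻¹)ᵀ · TᵀT · R⁻¹`. -/
noncomputable def shapeMatrix (a : ℝ) (p : Fin 5 → EuclideanSpace ℝ (Fin 4)) :
    Matrix (Fin 4) (Fin 4) ℝ :=
  ((regularPentatopeMatrix a)⁻¹)ᵀ * ((edgeMatrix p)ᵀ * edgeMatrix p) *
    (regularPentatopeMatrix a)⁻¹

/-- Squared Euclidean distance `d_{ij} = ‖p_j − p_i‖²`. -/
noncomputable def dsq (p : Fin 5 → EuclideanSpace ℝ (Fin 4)) (i j : Fin 5) : ℝ :=
  ‖p j - p i‖ ^ 2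

/-- The explicit polynomial `Θ` in the ten squared edge lengths. -/
def Theta (d12 d13 d14 d15 d23 d24 d25 d34 d35 d45 : ℝ) : ℝ :=
  600 * (d12 - d13) ^ 2 + 900 * d23 ^ 2 + 100 * (-2 * (d12 + d13) + d23) ^ 2 +
  75 * (d12 - d13 - 3 * d24 + 3 * d34) ^ 2 +
  25 * (d12 + d13 - 3 * d14 + d23 - 3 * (d24 + d34)) ^ 2 +
  25 * (d12 + d13 - 6 * d14 - 2 * d23 + 3 * (d24 + d34)) ^ 2 +
  45 * (d12 - d13 + d24 - 4 * d25 - d34 + 4 * d35) ^ 2 +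
  15 * (d12 + d13 + 2 * d14 - 8 * d15 - 2 * d23 - d24 + 4 * d25 - d34 + 4 * d35) ^ 2 +
  30 * (-d12 - d13 + d14 + 2 * d15 - d23 + d24 + 2 * d25 + d34 + 2 * d35 - 6 * d45) ^ 2 +
  9 * (d12 + d13 + d14 - 4 * d15 + d23 + d24 - 4 * d25 + d34 - 4 * (d35 + d45)) ^ 2

/-! With `G = TᵀT`, cyclicity of the trace turns `tr A` and `tr (A Aᵀ)` into `tr (G C)` and
`tr ((G C)²)` for `C = (RᵀR)⁻¹`. The regular pentatope has Gram matrix `RᵀR = (a²/2)(I + J)`,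
`J` the all-ones matrix, so `C = (2/a²)(I - J/5)` and the scale `a` cancels in `η⁽²⁾`. By
polarization `G` is linear in the squared distances, which makes the two traces the polynomials
`Σ d_ij / 5` and `Θ / 3600`. -/

namespace Matrix

variable {n : Type*} [Fintype n] [DecidableEq n]

theorem trace_transpose_inv_mul_mul_inv {R : Type*} [CommRing R] (P G : Matrix n n R) :
    (P⁻¹ᵀ * G * P⁻¹).trace = (G * (Pᵀ * P)⁻¹).trace := by
  rw [mul_inv_rev, ← transpose_nonsing_inv, ← Matrix.mul_assoc, trace_mul_comm (G * P⁻¹),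
    Matrix.mul_assoc]

theorem trace_mul_transpose_transpose_inv_mul_mul_inv {R : Type*} [CommRing R]
    (P G : Matrix n n R) (hG : Gᵀ = G) :
    (P⁻¹ᵀ * G * P⁻¹ * (P⁻¹ᵀ * G * P⁻¹)ᵀ).trace =
      (G * (Pᵀ * P)⁻¹ * (G * (Pᵀ * P)⁻¹)).trace := by
  rw [mul_inv_rev, ← transpose_nonsing_inv]
  simp only [transpose_mul, transpose_transpose, hG, Matrix.mul_assoc]
  rw [trace_mul_comm]
  simp only [Matrix.mul_assoc]

theorem one_add_ones_mul_one_sub_ones {K : Type*} [Field K] [CharZero K] :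
    (1 + of fun _ _ : n => (1 : K)) *
        (1 - ((Fintype.card n : K) + 1)⁻¹ • of fun _ _ : n => (1 : K)) = 1 := by
  have hJJ : (of fun _ _ : n => (1 : K)) * (of fun _ _ : n => (1 : K)) =
      (Fintype.card n : K) • of fun _ _ : n => (1 : K) := by
    ext i j; simp [mul_apply]
  have hc : (Fintype.card n : K) + 1 ≠ 0 := Nat.cast_add_one_ne_zero _
  rw [add_mul, mul_sub, mul_sub, one_mul, mul_one, one_mul, Matrix.mul_smul, hJJ, smul_smul,
    sub_add_sub_comm, ← add_smul]
  have hcoeff :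
      ((Fintype.card n : K) + 1)⁻¹ + ((Fintype.card n : K) + 1)⁻¹ * Fintype.card n = 1 := by
    field_simp; ring
  rw [hcoeff, one_smul, add_sub_cancel_right]

end Matrix

local notation "J₄" => (of fun _ _ : Fin 4 => (1 : ℝ))

theorem regularPentatopeMatrix_transpose_mul_self (a : ℝ) :
    (regularPentatopeMatrix a)ᵀ * regularPentatopeMatrix a = (a ^ 2 / 2) • (1 + J₄) := by
  have h3 : √3 ^ 2 = 3 := Real.sq_sqrt (by norm_num)
  have h6 : √6 ^ 2 = 6 := Real.sq_sqrt (by norm_num)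
  have h10 : √10 ^ 2 = 10 := Real.sq_sqrt (by norm_num)
  ext i j
  fin_cases i <;> fin_cases j <;>
    simp [regularPentatopeMatrix, mul_apply, Fin.sum_univ_four, one_apply] <;>
    ring_nf <;> simp only [h3, h6, h10] <;> ring

theorem inv_regularPentatopeMatrix_transpose_mul_self {a : ℝ} (ha : a ≠ 0) :
    ((regularPentatopeMatrix a)ᵀ * regularPentatopeMatrix a)⁻¹ =
      (2 / a ^ 2) • (1 - (5 : ℝ)⁻¹ • J₄) := by
  have h := one_add_ones_mul_one_sub_ones (n := Fin 4) (K := ℝ)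
  rw [Fintype.card_fin, show ((4 : ℕ) : ℝ) + 1 = 5 by norm_num] at h
  have hscalar : a ^ 2 / 2 * (2 / a ^ 2) = 1 := by field_simp
  apply inv_eq_right_inv
  rw [regularPentatopeMatrix_transpose_mul_self, smul_mul_smul_comm, h, hscalar, one_smul]

/-- The Gram matrix of the edge vectors `p_i - p_1`, `i = 2, …, 5`, written through the squared
distances by polarization: `⟪p_i - p_1, p_j - p_1⟫ = (d_{1i} + d_{1j} - d_{ij}) / 2`. -/
noncomputable def gramOfSqDists (d12 d13 d14 d15 d23 d24 d25 d34 d35 d45 : ℝ) :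
    Matrix (Fin 4) (Fin 4) ℝ :=
  !![d12, (d12 + d13 - d23) / 2, (d12 + d14 - d24) / 2, (d12 + d15 - d25) / 2;
     (d12 + d13 - d23) / 2, d13, (d13 + d14 - d34) / 2, (d13 + d15 - d35) / 2;
     (d12 + d14 - d24) / 2, (d13 + d14 - d34) / 2, d14, (d14 + d15 - d45) / 2;
     (d12 + d15 - d25) / 2, (d13 + d15 - d35) / 2, (d14 + d15 - d45) / 2, d15]

theorem edgeMatrix_transpose_mul_self_apply (p : Fin 5 → EuclideanSpace ℝ (Fin 4))
    (i j : Fin 4) :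
    ((edgeMatrix p)ᵀ * edgeMatrix p) i j =
      (dsq p 0 i.succ + dsq p 0 j.succ - dsq p i.succ j.succ) / 2 := by
  have hinner :
      ((edgeMatrix p)ᵀ * edgeMatrix p) i j = inner ℝ (p i.succ - p 0) (p j.succ - p 0) := by
    simp [mul_apply, edgeMatrix, PiLp.inner_apply, mul_comm]
  rw [hinner, real_inner_eq_norm_mul_self_add_norm_mul_self_sub_norm_sub_mul_self_div_two,
    sub_sub_sub_cancel_right, norm_sub_rev (p i.succ) (p j.succ)]
  simp only [dsq, sq]

theorem edgeMatrix_transpose_mul_self (p : Fin 5 → EuclideanSpace ℝ (Fin 4)) :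
    (edgeMatrix p)ᵀ * edgeMatrix p =
      gramOfSqDists (dsq p 0 1) (dsq p 0 2) (dsq p 0 3) (dsq p 0 4) (dsq p 1 2)
        (dsq p 1 3) (dsq p 1 4) (dsq p 2 3) (dsq p 2 4) (dsq p 3 4) := by
  have hdiag (i : Fin 5) : dsq p i i = 0 := by simp [dsq]
  have hcomm (i j : Fin 5) : dsq p j i = dsq p i j := by simp only [dsq, norm_sub_rev]
  ext i j
  rw [edgeMatrix_transpose_mul_self_apply]
  fin_cases i <;> fin_cases j <;> simp [gramOfSqDists, hdiag, hcomm 2 1, hcomm 3 1,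
    hcomm 4 1, hcomm 3 2, hcomm 4 2, hcomm 4 3] <;> ring

theorem one_sub_ones_fin_four :
    1 - (5 : ℝ)⁻¹ • J₄ =
      !![4 / 5, -1 / 5, -1 / 5, -1 / 5; -1 / 5, 4 / 5, -1 / 5, -1 / 5;
         -1 / 5, -1 / 5, 4 / 5, -1 / 5; -1 / 5, -1 / 5, -1 / 5, 4 / 5] := by
  ext i j
  fin_cases i <;> fin_cases j <;> norm_num [one_apply]

theorem trace_gramOfSqDists_mul (d12 d13 d14 d15 d23 d24 d25 d34 d35 d45 : ℝ) :
    (gramOfSqDists d12 d13 d14 d15 d23 d24 d25 d34 d35 d45 * (1 - (5 : ℝ)⁻¹ • J₄)).trace =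
      (d12 + d13 + d14 + d15 + d23 + d24 + d25 + d34 + d35 + d45) / 5 := by
  rw [one_sub_ones_fin_four]
  simp [gramOfSqDists, trace, Fin.sum_univ_four]
  ring

theorem trace_sq_gramOfSqDists_mul (d12 d13 d14 d15 d23 d24 d25 d34 d35 d45 : ℝ) :
    (gramOfSqDists d12 d13 d14 d15 d23 d24 d25 d34 d35 d45 * (1 - (5 : ℝ)⁻¹ • J₄) *
      (gramOfSqDists d12 d13 d14 d15 d23 d24 d25 d34 d35 d45 * (1 - (5 : ℝ)⁻¹ • J₄))).trace =
      Theta d12 d13 d14 d15 d23 d24 d25 d34 d35 d45 / 3600 := by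
  rw [one_sub_ones_fin_four]
  simp [gramOfSqDists, trace, Fin.sum_univ_four, Theta]
  ring

theorem sum_sq_dist_pairs (p : Fin 5 → EuclideanSpace ℝ (Fin 4)) :
    ∑ ij ∈ Finset.univ.filter (fun ij : Fin 5 × Fin 5 => ij.1 < ij.2), ‖p ij.2 - p ij.1‖ ^ 2 =
      dsq p 0 1 + dsq p 0 2 + dsq p 0 3 + dsq p 0 4 + dsq p 1 2 + dsq p 1 3 + dsq p 1 4 +
        dsq p 2 3 + dsq p 2 4 + dsq p 3 4 := by
  rw [Finset.sum_filter, Fintype.sum_prod_type]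
  simp [Fin.sum_univ_five, dsq]
  ring

theorem quality_heuristic_two_general (p : Fin 5 → EuclideanSpace ℝ (Fin 4))
    (a : ℝ) (ha : 0 < a) :
    (shapeMatrix a p).trace /
        (2 * Real.sqrt (((shapeMatrix a p) * (shapeMatrix a p)ᵀ).trace)) =
      6 * (∑ ij ∈ Finset.univ.filter (fun ij : Fin 5 × Fin 5 => ij.1 < ij.2),
            ‖p ij.2 - p ij.1‖ ^ 2) /
        Real.sqrt (Theta (dsq p 0 1) (dsq p 0 2) (dsq p 0 3) (dsq p 0 4) (dsq p 1 2)
          (dsq p 1 3) (dsq p 1 4) (dsq p 2 3) (dsq p 2 4) (dsq p 3 4)) := by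
  have hsymm : ((edgeMatrix p)ᵀ * edgeMatrix p)ᵀ = (edgeMatrix p)ᵀ * edgeMatrix p := by
    rw [transpose_mul, transpose_transpose]
  rw [shapeMatrix, trace_mul_transpose_transpose_inv_mul_mul_inv _ _ hsymm,
    trace_transpose_inv_mul_mul_inv, inv_regularPentatopeMatrix_transpose_mul_self ha.ne',
    edgeMatrix_transpose_mul_self, Matrix.mul_smul, smul_mul_smul_comm, trace_smul, trace_smul,
    trace_gramOfSqDists_mul, trace_sq_gramOfSqDists_mul, sum_sq_dist_pairs]
  set c := 2 / a ^ 2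
  set S := dsq p 0 1 + dsq p 0 2 + dsq p 0 3 + dsq p 0 4 + dsq p 1 2 + dsq p 1 3 + dsq p 1 4 +
    dsq p 2 3 + dsq p 2 4 + dsq p 3 4
  set Θ := Theta (dsq p 0 1) (dsq p 0 2) (dsq p 0 3) (dsq p 0 4) (dsq p 1 2)
    (dsq p 1 3) (dsq p 1 4) (dsq p 2 3) (dsq p 2 4) (dsq p 3 4)
  have hsqrt : 2 * √(c * c * (Θ / 3600)) = c / 30 * √Θ := by
    rw [show c * c * (Θ / 3600) = (c / 60) ^ 2 * Θ by ring, Real.sqrt_mul (by positivity),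
      Real.sqrt_sq (by positivity)]
    ring
  rw [smul_eq_mul, smul_eq_mul, hsqrt, show c * (S / 5) = c / 30 * (6 * S) by ring,
    mul_div_mul_left _ _ (by positivity)]

/-- For affinely independent `p` and `a > 0`, the quality heuristic
`η⁽²⁾ = trace(A(R,T)) / (2·√(trace(A(R,T)·A(R,T)ᵀ)))` satisfies
`η⁽²⁾ = 6 · (Σ_{1 ≤ i < j ≤ 5} d_{ij}) / √Θ`; in particular `η⁽²⁾` does not depend
on `a`. -/
theorem quality_heuristic_two (p : Fin 5 → EuclideanSpace ℝ (Fin 4))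
    (hp : AffineIndependent ℝ p) (a : ℝ) (ha : 0 < a) :
    (shapeMatrix a p).trace /
        (2 * Real.sqrt (((shapeMatrix a p) * (shapeMatrix a p)ᵀ).trace)) =
      6 * (∑ ij ∈ Finset.univ.filter (fun ij : Fin 5 × Fin 5 => ij.1 < ij.2),
            ‖p ij.2 - p ij.1‖ ^ 2) /
        Real.sqrt (Theta (dsq p 0 1) (dsq p 0 2) (dsq p 0 3) (dsq p 0 4) (dsq p 1 2)
          (dsq p 1 3) (dsq p 1 4) (dsq p 2 3) (dsq p 2 4) (dsq p 3 4)) :=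
  quality_heuristic_two_general p a ha
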